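/- Let A and B be vertices of X = J(v,k,i) and let x = |A ∩ B|. If k − Δ ≤ x < i, then the distance between A and B in X equals ⌈(k − x)/(k − i)⌉. -/

import Mathlib

/-- The generalized Johnson graph `J(v,k,i)`: vertices are the `k`-element subsets of a
`v`-element set, two vertices adjacent iff their intersection has exactly `i` elements. -/
def genJohnsonGraph (v k i : ℕ) :
    SimpleGraph {A : Finset (Fin v) // A.card = k} where
  Adj A B := A ≠ B ∧ (A.1 ∩ B.1).card = i
  symm := by
    refine ⟨?_⟩
    rintro A B ⟨hne, hcard⟩
    exact ⟨hne.symm, by rwa [Finset.inter_comm]⟩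
  loopless := ⟨by rintro A ⟨hne, -⟩; exact hne rfl⟩

/-!
The lower bound: `|A \ B| = k - |A ∩ B|` satisfies the triangle inequality and equals `k - i`
on edges, so it is at most `(k - i) · dist(A, B)`. The upper bound: while `|A ∩ B| + k < 2i`,
replace `A` by a neighbour sharing `k - i` more points with `B`; once `2i ≤ |A ∩ B| + k`, `A` and
`B` have a common neighbour, assembled region by region from the Venn diagram of `A` and `B`,
the hypothesis `k - Δ ≤ |A ∩ B|` leaving enough room outside `A ∪ B`.
-/

open Finset SimpleGraph

theorem Finset.exists_card_inter_eq {α : Type*} [Fintype α] [DecidableEq α] (A B : Finset α)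
    {a b c d : ℕ} (ha : a ≤ #(A ∩ B)) (hb : b ≤ #(A \ B)) (hc : c ≤ #(B \ A))
    (hd : d ≤ #(A ∪ B)ᶜ) :
    ∃ C : Finset α, #C = a + b + c + d ∧ #(A ∩ C) = a + b ∧ #(C ∩ B) = a + c := by
  obtain ⟨P, hP, rfl⟩ := exists_subset_card_eq ha
  obtain ⟨S, hS, rfl⟩ := exists_subset_card_eq hb
  obtain ⟨T, hT, rfl⟩ := exists_subset_card_eq hc
  obtain ⟨O, hO, rfl⟩ := exists_subset_card_eq hd
  simp only [subset_iff, mem_inter, mem_sdiff, mem_compl, mem_union] at hP hS hT hO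
  have hPS : Disjoint P S := disjoint_left.2 fun x hxP hxS => (hS hxS).2 (hP hxP).2
  have hPT : Disjoint P T := disjoint_left.2 fun x hxP hxT => (hT hxT).2 (hP hxP).1
  have hPST : Disjoint (P ∪ S) T := disjoint_left.2 fun x hx hxT => by grind
  have hPSTO : Disjoint (P ∪ S ∪ T) O := disjoint_left.2 fun x hx hxO => by grind
  refine ⟨P ∪ S ∪ T ∪ O, ?_, ?_, ?_⟩
  · rw [card_union_of_disjoint hPSTO, card_union_of_disjoint hPST, card_union_of_disjoint hPS]
  · rw [show A ∩ (P ∪ S ∪ T ∪ O) = P ∪ S by ext; grind, card_union_of_disjoint hPS]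
  · rw [show (P ∪ S ∪ T ∪ O) ∩ B = P ∪ T by ext; grind, card_union_of_disjoint hPT]

theorem SimpleGraph.Walk.le_mul_length {V : Type*} {G : SimpleGraph V} (f : V → V → ℕ) (c : ℕ)
    (hself : ∀ u, f u u = 0) (hadj : ∀ u w x, G.Adj u w → f u x ≤ c + f w x) :
    ∀ {u w : V} (p : G.Walk u w), f u w ≤ c * p.length
  | u, _, .nil => by simp [hself]
  | u, _, .cons h p => by
    grw [hadj _ _ _ h, le_mul_length f c hself hadj p, length_cons, mul_add_one, add_comm]

theorem SimpleGraph.Reachable.le_mul_dist {V : Type*} {G : SimpleGraph V} (f : V → V → ℕ)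
    (c : ℕ) (hself : ∀ u, f u u = 0) (hadj : ∀ u w x, G.Adj u w → f u x ≤ c + f w x)
    {u w : V} (h : G.Reachable u w) : f u w ≤ c * G.dist u w := by
  obtain ⟨p, hp⟩ := h.exists_walk_length_eq_dist
  exact hp ▸ p.le_mul_length f c hself hadj

namespace genJohnsonGraph

variable {v k i : ℕ} {A B : {A : Finset (Fin v) // #A = k}}

theorem adj_iff (hik : i < k) : (genJohnsonGraph v k i).Adj A B ↔ #(A.1 ∩ B.1) = i := by
  refine ⟨And.right, fun h => ⟨?_, h⟩⟩
  rintro rfl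
  rw [inter_self, A.2] at h
  omega

theorem card_sdiff_eq : #(A.1 \ B.1) = k - #(A.1 ∩ B.1) := by
  rw [card_sdiff, A.2, inter_comm]

theorem card_compl_union_eq : #(A.1 ∪ B.1)ᶜ = v - (2 * k - #(A.1 ∩ B.1)) := by
  have := card_union_add_card_inter A.1 B.1
  rw [card_compl, Fintype.card_fin, A.2, B.2] at *
  congr 1
  omega

theorem sub_card_inter_le_mul_dist (h : (genJohnsonGraph v k i).Reachable A B) :
    k - #(A.1 ∩ B.1) ≤ (k - i) * (genJohnsonGraph v k i).dist A B := by
  rw [← card_sdiff_eq]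
  refine h.le_mul_dist (fun A B => #(A.1 \ B.1)) _ (by simp) fun A C X hAC => ?_
  calc #(A.1 \ X.1) ≤ #(A.1 \ C.1 ∪ C.1 \ X.1) := card_le_card (sdiff_triangle _ _ _)
    _ ≤ #(A.1 \ C.1) + #(C.1 \ X.1) := card_union_le _ _
    _ = (k - i) + #(C.1 \ X.1) := by rw [card_sdiff_eq, hAC.2]

theorem exists_vertex_card_inter_eq (A B : {A : Finset (Fin v) // #A = k}) {a b c d : ℕ}
    (ha : a ≤ #(A.1 ∩ B.1)) (hb : b ≤ k - #(A.1 ∩ B.1)) (hc : c ≤ k - #(A.1 ∩ B.1))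
    (hd : d ≤ v - (2 * k - #(A.1 ∩ B.1))) (hsum : a + b + c + d = k) :
    ∃ C : {A : Finset (Fin v) // #A = k}, #(A.1 ∩ C.1) = a + b ∧ #(C.1 ∩ B.1) = a + c := by
  have hBA : #(B.1 \ A.1) = k - #(A.1 ∩ B.1) := by rw [card_sdiff_eq, inter_comm]
  obtain ⟨C, hC, hAC, hCB⟩ := Finset.exists_card_inter_eq A.1 B.1 ha (card_sdiff_eq ▸ hb)
    (hBA ▸ hc) (card_compl_union_eq ▸ hd)
  exact ⟨⟨C, hC.trans hsum⟩, hAC, hCB⟩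

theorem exists_adj_card_inter_eq_add (hik : i < k) (hxi : #(A.1 ∩ B.1) ≤ i) :
    ∃ C, (genJohnsonGraph v k i).Adj A C ∧ #(C.1 ∩ B.1) = #(A.1 ∩ B.1) + (k - i) := by
  obtain ⟨C, hAC, hCB⟩ := exists_vertex_card_inter_eq A B (a := #(A.1 ∩ B.1))
    (b := i - #(A.1 ∩ B.1)) (c := k - i) (d := 0)
    le_rfl (by omega) (by omega) (Nat.zero_le _) (by omega)
  exact ⟨C, (adj_iff hik).2 (by omega), hCB⟩

theorem exists_adj_adj (h2k : 2 * k ≤ v) (hik : i < k)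
    (hxd : k - (v - 2 * k + 2 * i) ≤ #(A.1 ∩ B.1)) (hxi : #(A.1 ∩ B.1) ≤ i)
    (hx2 : 2 * i ≤ #(A.1 ∩ B.1) + k) :
    ∃ C, (genJohnsonGraph v k i).Adj A C ∧ (genJohnsonGraph v k i).Adj C B := by
  -- one of `2 * i - k` and `k - 2 * i` is zero
  obtain ⟨C, hAC, hCB⟩ := exists_vertex_card_inter_eq A B (a := 2 * i - k)
    (b := i - (2 * i - k)) (c := i - (2 * i - k)) (d := k - 2 * i)
    (by omega) (by omega) (by omega) (by omega) (by omega)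
  exact ⟨C, (adj_iff hik).2 (by omega), (adj_iff hik).2 (by omega)⟩

theorem exists_walk_length_le (h2k : 2 * k ≤ v) (hik : i < k) (n : ℕ) :
    ∀ A B : {A : Finset (Fin v) // #A = k}, k - (v - 2 * k + 2 * i) ≤ #(A.1 ∩ B.1) →
      #(A.1 ∩ B.1) < i → k - #(A.1 ∩ B.1) ≤ (k - i) * n →
      ∃ p : (genJohnsonGraph v k i).Walk A B, p.length ≤ n := by
  induction n with
  | zero => intro A B _ hxi hn; omega
  | succ n ih =>
    intro A B hxd hxi hn
    rw [mul_add_one] at hn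
    by_cases hx2 : 2 * i ≤ #(A.1 ∩ B.1) + k
    · obtain ⟨C, hAC, hCB⟩ := exists_adj_adj h2k hik hxd hxi.le hx2
      have hn0 : n ≠ 0 := by rintro rfl; omega
      exact ⟨.cons hAC (.cons hCB .nil), by simp only [Walk.length_cons, Walk.length_nil]; omega⟩
    · obtain ⟨C, hAC, hCB⟩ := exists_adj_card_inter_eq_add hik hxi.le
      obtain ⟨p, hp⟩ := ih C B (by omega) (by omega) (by omega)
      exact ⟨.cons hAC p, by simpa using hp⟩

end genJohnsonGraph

theorem dist_eq_ceil_general (v k i : ℕ) (hik : i < k)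
    (h2k : 2 * k ≤ v)
    (A B : {A : Finset (Fin v) // A.card = k})
    (hxd : k - (v - 2 * k + 2 * i) ≤ (A.1 ∩ B.1).card)
    (hxi : (A.1 ∩ B.1).card < i) :
    (genJohnsonGraph v k i).dist A B = (k - (A.1 ∩ B.1).card) ⌈/⌉ (k - i) := by
  have hpos : 0 < k - i := Nat.sub_pos_of_lt hik
  obtain ⟨p, hp⟩ := genJohnsonGraph.exists_walk_length_le h2k hik _ A B hxd hxi
    ((ceilDiv_le_iff_le_mul hpos).1 le_rfl)
  refine le_antisymm ((SimpleGraph.dist_le p).trans hp) ?_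
  rw [ceilDiv_le_iff_le_mul hpos]
  exact genJohnsonGraph.sub_card_inter_le_mul_dist ⟨p⟩

/-- If `k - Δ ≤ x = |A ∩ B| < i`, then `dist(A,B) = ⌈(k - x)/(k - i)⌉` in `J(v,k,i)`. -/
theorem dist_eq_ceil (v k i : ℕ) (hik : i < k) (hkv : k < v)
    (h2k : 2 * k ≤ v) (hexc : ¬(v = 2 * k ∧ i = 0))
    (A B : {A : Finset (Fin v) // A.card = k})
    (hxd : k - (v - 2 * k + 2 * i) ≤ (A.1 ∩ B.1).card)
    (hxi : (A.1 ∩ B.1).card < i) :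
    (genJohnsonGraph v k i).dist A B = (k - (A.1 ∩ B.1).card) ⌈/⌉ (k - i) :=
  dist_eq_ceil_general v k i hik h2k A B hxd hxi
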